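/- arXiv:2010.16315 — 3 statements merged into one kernel-verified Lean document; each statement's English description precedes it below -/
import Mathlib

section
/- For every connected graph G, th_pd×(G) ≥ ⌈|V(G)| / (Δ(G) + 1)⌉. -/
open SimpleGraph Set

variable {V : Type*} {W : Type*}

/-- The closed neighborhood of a set `S`. -/
def closedNbhdSet (G : SimpleGraph V) (S : Set V) : Set V :=
  S ∪ {w | ∃ u ∈ S, G.Adj u w}

/-- One round of the zero forcing propagation step. -/
def pdStep (G : SimpleGraph V) (A : Set V) : Set V :=
  A ∪ {w | ∃ u ∈ A, G.neighborSet u \ A = {w}}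

/-- `obs G S k` is the set `P^[k](S)` of vertices observed after round `k`. -/
def obs (G : SimpleGraph V) (S : Set V) : ℕ → Set V
  | 0 => S
  | 1 => closedNbhdSet G S
  | (n + 2) => pdStep G (obs G S (n + 1))

/-- `S` is a power dominating set. -/
def IsPDS (G : SimpleGraph V) (S : Set V) : Prop :=
  ∃ t, obs G S t = Set.univ

/-- The power propagation time `pt_pd(G;S)`: least positive `t` with `P^[t](S) = V(G)`. -/
noncomputable def ptpd (G : SimpleGraph V) (S : Set V) : ℕ :=
  sInf {t | 1 ≤ t ∧ obs G S t = Set.univ}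

/-- `S` is a dominating set. -/
def IsDomSet (G : SimpleGraph V) (S : Set V) : Prop :=
  closedNbhdSet G S = Set.univ

/-- The domination number `γ(G)`. -/
noncomputable def gamma (G : SimpleGraph V) : ℕ :=
  sInf {k | ∃ S : Set V, IsDomSet G S ∧ S.ncard = k}

/-- The power domination number `γ_P(G)`. -/
noncomputable def gammaP (G : SimpleGraph V) : ℕ :=
  sInf {k | ∃ S : Set V, IsPDS G S ∧ S.ncard = k}

/-- The product power throttling number `th_pd^×(G)`. -/
noncomputable def thpd (G : SimpleGraph V) : ℕ :=
  sInf {m | ∃ S : Set V, IsPDS G S ∧ m = S.ncard * ptpd G S}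

/-- The power propagation time of `G`: minimum over minimum power dominating sets. -/
noncomputable def ptG (G : SimpleGraph V) : ℕ :=
  sInf {t | ∃ S : Set V, IsPDS G S ∧ S.ncard = gammaP G ∧ t = ptpd G S}

/-- `newObs G S k` is `P^(k)(S)`, the set of vertices first observed in round `k`. -/
def newObs (G : SimpleGraph V) (S : Set V) : ℕ → Set V
  | 0 => S
  | (k + 1) => obs G S (k + 1) \ obs G S k

/-- `rd G S v` is the round in which `v` is first observed. -/
noncomputable def rd (G : SimpleGraph V) (S : Set V) (v : V) : ℕ :=
  sInf {k | v ∈ obs G S k}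

/-!
Every vertex outside `N[S] = P^[1](S)` that is observed by round `k + 2` was forced by a vertex
observed by round `k + 1`, and a vertex forces at most one other (it is the unique unobserved
neighbour). Hence `|P^[k+2](S)| ≤ |P^[k+1](S)| + |N[S]|`, so `|P^[t](S)| ≤ t |N[S]| ≤ t |S| (Δ + 1)`;
taking `t = pt_pd(G;S)` gives `|V| ≤ |S| pt_pd(G;S) (Δ + 1)` for every power dominating set `S`.
-/

section Propagation

variable {G : SimpleGraph V} {S : Set V}

lemma obs_subset_obs_succ (k : ℕ) : obs G S k ⊆ obs G S (k + 1) := by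
  match k with
  | 0 => exact subset_union_left
  | _ + 1 => exact subset_union_left

lemma obs_monotone : Monotone (obs G S) :=
  monotone_nat_of_le_succ obs_subset_obs_succ

lemma eq_of_sdiff_obs_eq_singleton {N : Set V} {a b : ℕ} {v w : V}
    (ha : N \ obs G S a = {v}) (hb : N \ obs G S b = {w}) : v = w := by
  rcases le_total a b with hab | hab <;>
    have h := sdiff_subset_sdiff_right (s := N) (obs_monotone (G := G) (S := S) hab) <;>
    rw [ha, hb, singleton_subset_singleton] at h
  exacts [h.symm, h]

lemma exists_forcer_of_mem_obs {k : ℕ} {v : V} (hv : v ∈ obs G S (k + 2))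
    (hv₁ : v ∉ obs G S 1) :
    ∃ u ∈ obs G S (k + 1), ∃ a, G.neighborSet u \ obs G S a = {v} := by
  induction k with
  | zero =>
    obtain hv | ⟨u, hu, huv⟩ := hv
    · exact absurd hv hv₁
    · exact ⟨u, hu, 1, huv⟩
  | succ k ih =>
    obtain hv | ⟨u, hu, huv⟩ := hv
    · obtain ⟨u, hu, a, huv⟩ := ih hv
      exact ⟨u, obs_subset_obs_succ _ hu, a, huv⟩
    · exact ⟨u, hu, _, huv⟩

variable [Finite V]

lemma ncard_obs_succ_succ_le (k : ℕ) :
    (obs G S (k + 2)).ncard ≤ (obs G S (k + 1)).ncard + (obs G S 1).ncard := by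
  have hforcer : ∀ v ∈ obs G S (k + 2) \ obs G S 1,
      ∃ u ∈ obs G S (k + 1), ∃ a, G.neighborSet u \ obs G S a = {v} :=
    fun v hv => exists_forcer_of_mem_obs hv.1 hv.2
  choose! f hf a hfa using hforcer
  have hnew : (obs G S (k + 2) \ obs G S 1).ncard ≤ (obs G S (k + 1)).ncard :=
    ncard_le_ncard_of_injOn f hf fun v hv w hw hvw =>
      eq_of_sdiff_obs_eq_singleton (hfa v hv) (hvw ▸ hfa w hw)
  have := ncard_le_ncard_sdiff_add_ncard (obs G S (k + 2)) (obs G S 1)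
  omega

lemma ncard_obs_succ_le (k : ℕ) :
    (obs G S (k + 1)).ncard ≤ (k + 1) * (obs G S 1).ncard := by
  induction k with
  | zero => simp
  | succ k ih =>
    calc (obs G S (k + 2)).ncard ≤ (obs G S (k + 1)).ncard + (obs G S 1).ncard :=
          ncard_obs_succ_succ_le k
      _ ≤ (k + 2) * (obs G S 1).ncard := by linarith

end Propagation

lemma ncard_closedNbhdSet_le [Fintype V] (G : SimpleGraph V) [DecidableRel G.Adj]
    (S : Set V) : (closedNbhdSet G S).ncard ≤ S.ncard * (G.maxDegree + 1) := by
  classical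
  have hsub : closedNbhdSet G S ⊆ ↑(S.toFinset.biUnion fun u => insert u (G.neighborFinset u)) := by
    rintro w (hw | ⟨u, hu, huw⟩) <;> simp
    exacts [⟨w, hw, .inl rfl⟩, ⟨u, hu, .inr huw⟩]
  calc (closedNbhdSet G S).ncard
      ≤ (S.toFinset.biUnion fun u => insert u (G.neighborFinset u)).card := by
        simpa only [ncard_coe_finset] using ncard_le_ncard hsub
    _ ≤ S.toFinset.card * (G.maxDegree + 1) :=
        Finset.card_biUnion_le_card_mul _ _ _ fun u _ =>
          (Finset.card_insert_le _ _).trans (by simpa using G.degree_le_maxDegree u)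
    _ = S.ncard * (G.maxDegree + 1) := by rw [ncard_eq_toFinset_card']

lemma card_le_of_obs_eq_univ [Fintype V] {G : SimpleGraph V} [DecidableRel G.Adj] {S : Set V}
    {t : ℕ} (ht : 1 ≤ t) (hU : obs G S t = univ) :
    Fintype.card V ≤ S.ncard * t * (G.maxDegree + 1) := by
  obtain ⟨k, rfl⟩ : ∃ k, t = k + 1 := ⟨t - 1, by omega⟩
  calc Fintype.card V = (obs G S (k + 1)).ncard := by rw [hU, ncard_univ, Nat.card_eq_fintype_card]
    _ ≤ (k + 1) * (closedNbhdSet G S).ncard := ncard_obs_succ_le k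
    _ ≤ (k + 1) * (S.ncard * (G.maxDegree + 1)) :=
        Nat.mul_le_mul_left _ (ncard_closedNbhdSet_le G S)
    _ = S.ncard * (k + 1) * (G.maxDegree + 1) := by ring

lemma IsPDS.ptpd_spec {G : SimpleGraph V} {S : Set V} (h : IsPDS G S) :
    1 ≤ ptpd G S ∧ obs G S (ptpd G S) = univ := by
  obtain ⟨t, ht⟩ := h
  exact Nat.sInf_mem (s := {t | 1 ≤ t ∧ obs G S t = univ})
    ⟨t + 1, t.succ_pos, eq_univ_of_univ_subset (ht ▸ obs_subset_obs_succ t)⟩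

lemma exists_isPDS_thpd_eq (G : SimpleGraph V) : ∃ S, IsPDS G S ∧ thpd G = S.ncard * ptpd G S :=
  Nat.sInf_mem (s := {m | ∃ S, IsPDS G S ∧ m = S.ncard * ptpd G S}) ⟨_, univ, ⟨0, rfl⟩, rfl⟩

theorem stmt4_general [Fintype V] (G : SimpleGraph V) [DecidableRel G.Adj] :
    ⌈(Fintype.card V : ℚ) / (G.maxDegree + 1)⌉ ≤ (thpd G : ℤ) := by
  obtain ⟨S, hS, hth⟩ := exists_isPDS_thpd_eq G
  obtain ⟨ht, hU⟩ := hS.ptpd_spec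
  rw [Int.ceil_le, div_le_iff₀ (by positivity)]
  exact_mod_cast hth ▸ card_le_of_obs_eq_univ ht hU

theorem stmt4 [Fintype V] (G : SimpleGraph V) [DecidableRel G.Adj] (hG : G.Connected) :
    ⌈(Fintype.card V : ℚ) / (G.maxDegree + 1)⌉ ≤ (thpd G : ℤ) :=
  stmt4_general G
end

section
/- Let S be a power dominating set of a graph G. Then for all i ≥ 0, |P^(i+1)(S)| ≤ |P^(1)(S)|, where P^(k)(S) is the set of vertices first observed in round k. -/
open SimpleGraph Set

variable {V : Type*} {W : Type*}

section Aux
variable {G : SimpleGraph V} {S : Set V}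

lemma obs_succ_subset (G : SimpleGraph V) (S : Set V) : ∀ k, obs G S k ⊆ obs G S (k+1)
  | 0 => Set.subset_union_left
  | 1 => Set.subset_union_left
  | (n+2) => Set.subset_union_left

lemma obs_mono (G : SimpleGraph V) (S : Set V) {j k : ℕ} (h : j ≤ k) :
    obs G S j ⊆ obs G S k := by
  induction h with
  | refl => exact subset_rfl
  | step _ ih => exact ih.trans (obs_succ_subset G S _)

lemma rd_le {v : V} {k : ℕ} (h : v ∈ obs G S k) : rd G S v ≤ k := Nat.sInf_le h

lemma mem_obs_rd {v : V} (h : 1 ≤ rd G S v) : v ∈ obs G S (rd G S v) := by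
  by_cases hne : {k | v ∈ obs G S k}.Nonempty
  · exact Nat.sInf_mem hne
  · exfalso
    rw [rd, Set.not_nonempty_iff_eq_empty.mp hne, Nat.sInf_empty] at h
    omega

lemma not_mem_obs_pred {v : V} (h : 1 ≤ rd G S v) : v ∉ obs G S (rd G S v - 1) := by
  intro hm
  have := rd_le hm
  omega

lemma exists_forcer {v : V} (h : 2 ≤ rd G S v) :
    ∃ u, u ∈ obs G S (rd G S v - 1) ∧
      G.neighborSet u \ obs G S (rd G S v - 1) = {v} := by
  obtain ⟨n, hn⟩ : ∃ n, rd G S v = n + 2 := ⟨rd G S v - 2, by omega⟩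
  have hv : v ∈ obs G S (rd G S v) := mem_obs_rd (by omega)
  have hnm : v ∉ obs G S (rd G S v - 1) := not_mem_obs_pred (by omega)
  rw [hn] at hv hnm ⊢
  rw [show n + 2 - 1 = n + 1 from rfl] at hnm ⊢
  rw [show obs G S (n+2) = pdStep G (obs G S (n+1)) from rfl] at hv
  rcases hv with hv | ⟨u, hu, hN⟩
  · exact absurd hv hnm
  · exact ⟨u, hu, hN⟩

end Aux

noncomputable def pdg (G : SimpleGraph V) (S : Set V) (v : V) : V :=
  if h : 2 ≤ rd G S v then (exists_forcer h).choose else v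

section Aux2
variable {G : SimpleGraph V} {S : Set V}

lemma pdg_spec {v : V} (h : 2 ≤ rd G S v) :
    pdg G S v ∈ obs G S (rd G S v - 1) ∧
      G.neighborSet (pdg G S v) \ obs G S (rd G S v - 1) = {v} := by
  rw [pdg, dif_pos h]
  exact (exists_forcer h).choose_spec

lemma pdg_eq_self {v : V} (h : rd G S v ≤ 1) : pdg G S v = v := by
  rw [pdg, dif_neg (by omega)]

lemma rd_pdg_lt {v : V} (h : 2 ≤ rd G S v) : rd G S (pdg G S v) < rd G S v := by
  have := rd_le (pdg_spec h).1
  omega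

lemma rd_pdg_le (v : V) : rd G S (pdg G S v) ≤ rd G S v := by
  by_cases h : 2 ≤ rd G S v
  · exact (rd_pdg_lt h).le
  · rw [pdg_eq_self (by omega)]

lemma mem_nbhd_pdg {v : V} (h : 2 ≤ rd G S v) : G.Adj (pdg G S v) v := by
  have hspec := (pdg_spec h).2
  have : v ∈ G.neighborSet (pdg G S v) \ obs G S (rd G S v - 1) := by
    rw [hspec]; rfl
  exact this.1

lemma pdg_not_mem_S {v : V} (h : 2 ≤ rd G S v) : pdg G S v ∉ S := by
  intro hmem
  have hadj := mem_nbhd_pdg h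
  have : v ∈ obs G S 1 := Or.inr ⟨pdg G S v, hmem, hadj⟩
  have := rd_le this
  omega

lemma mem_obs_rd_of_nonempty {v : V} (hne : {k | v ∈ obs G S k}.Nonempty) :
    v ∈ obs G S (rd G S v) := Nat.sInf_mem hne

lemma rd_pdg_pos {v : V} (h : 2 ≤ rd G S v) : 1 ≤ rd G S (pdg G S v) := by
  by_contra hc
  push_neg at hc
  have h0 : rd G S (pdg G S v) = 0 := by omega
  have hmem : pdg G S v ∈ obs G S (rd G S (pdg G S v)) :=
    mem_obs_rd_of_nonempty ⟨rd G S v - 1, (pdg_spec h).1⟩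
  rw [h0] at hmem
  exact pdg_not_mem_S h hmem

lemma pdg_inj_aux {a b : V} (ha : 2 ≤ rd G S a) (hb : 2 ≤ rd G S b)
    (hle : rd G S a ≤ rd G S b) (heq : pdg G S a = pdg G S b) : a = b := by
  have h1 := (pdg_spec ha).2
  have h2 := (pdg_spec hb).2
  have hsub : obs G S (rd G S a - 1) ⊆ obs G S (rd G S b - 1) :=
    obs_mono G S (by omega)
  have : b ∈ G.neighborSet (pdg G S a) \ obs G S (rd G S a - 1) := by
    have hbmem : b ∈ G.neighborSet (pdg G S b) \ obs G S (rd G S b - 1) := by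
      rw [h2]; rfl
    rw [heq]
    exact ⟨hbmem.1, fun hc => hbmem.2 (hsub hc)⟩
  rw [h1] at this
  exact this.symm

lemma pdg_inj {a b : V} (ha : 2 ≤ rd G S a) (hb : 2 ≤ rd G S b)
    (heq : pdg G S a = pdg G S b) : a = b := by
  rcases le_total (rd G S a) (rd G S b) with h | h
  · exact pdg_inj_aux ha hb h heq
  · exact (pdg_inj_aux hb ha h heq.symm).symm

end Aux2

noncomputable def pdOrigin (G : SimpleGraph V) (S : Set V) (v : V) : V :=
  (pdg G S)^[rd G S v] v

section Aux3
variable {G : SimpleGraph V} {S : Set V}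

lemma iter_fix {v : V} (h : rd G S v ≤ 1) : ∀ k, (pdg G S)^[k] v = v := by
  intro k
  induction k with
  | zero => rfl
  | succ n ih => rw [Function.iterate_succ_apply, pdg_eq_self h, ih]

lemma iter_stab : ∀ m : ℕ, ∀ v : V, rd G S v ≤ m →
    (pdg G S)^[m] v = pdOrigin G S v := by
  intro m
  induction m using Nat.strong_induction_on with
  | _ m ih =>
    intro v hv
    by_cases h1 : rd G S v ≤ 1
    · rw [iter_fix h1, pdOrigin, iter_fix h1]
    · push_neg at h1
      have h2 : 2 ≤ rd G S v := h1
      obtain ⟨m', rfl⟩ : ∃ m', m = m' + 1 := ⟨m - 1, by omega⟩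
      have hlt := rd_pdg_lt h2
      rw [Function.iterate_succ_apply]
      rw [ih m' (by omega) (pdg G S v) (by omega)]
      obtain ⟨r, hr⟩ : ∃ r, rd G S v = r + 1 := ⟨rd G S v - 1, by omega⟩
      show pdOrigin G S (pdg G S v) = (pdg G S)^[rd G S v] v
      rw [hr, Function.iterate_succ_apply]
      exact (ih r (by omega) (pdg G S v) (by omega)).symm

lemma pdOrigin_pdg {v : V} (h : 2 ≤ rd G S v) :
    pdOrigin G S (pdg G S v) = pdOrigin G S v := by
  have hlt := rd_pdg_lt h
  obtain ⟨r, hr⟩ : ∃ r, rd G S v = r + 1 := ⟨rd G S v - 1, by omega⟩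
  show pdOrigin G S (pdg G S v) = (pdg G S)^[rd G S v] v
  rw [hr, Function.iterate_succ_apply]
  exact (iter_stab r (pdg G S v) (by omega)).symm

lemma rd_iter_le : ∀ (k : ℕ) (v : V), rd G S ((pdg G S)^[k] v) ≤ rd G S v := by
  intro k
  induction k with
  | zero => intro v; rfl
  | succ n ih =>
    intro v
    rw [Function.iterate_succ_apply]
    exact (ih (pdg G S v)).trans (rd_pdg_le v)

lemma pdOrigin_mem : ∀ n : ℕ, ∀ v : V, rd G S v = n → 2 ≤ n →
    pdOrigin G S v ∈ obs G S 1 \ obs G S 0 := by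
  intro n
  induction n using Nat.strong_induction_on with
  | _ n ih =>
    intro v hrd hn
    have h2 : 2 ≤ rd G S v := by omega
    have hmem1 := rd_pdg_pos h2
    by_cases hc : 2 ≤ rd G S (pdg G S v)
    · rw [← pdOrigin_pdg h2]
      exact ih (rd G S (pdg G S v)) (by have := rd_pdg_lt h2; omega) (pdg G S v) rfl hc
    · have hrdg : rd G S (pdg G S v) = 1 := by omega
      have hg1 : pdg G S v ∈ obs G S 1 := by
        have := mem_obs_rd_of_nonempty (v := pdg G S v) (G := G) (S := S)
          ⟨rd G S v - 1, (pdg_spec h2).1⟩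
        rwa [hrdg] at this
      rw [← pdOrigin_pdg h2, pdOrigin, hrdg]
      rw [Function.iterate_one, pdg_eq_self (by omega)]
      exact ⟨hg1, pdg_not_mem_S h2⟩

lemma chain_meet : ∀ (k : ℕ) (a b : V), 2 ≤ rd G S a →
    (pdg G S)^[k] b = pdg G S a →
    (∃ j, (pdg G S)^[j] a = b) ∨ (∃ j, (pdg G S)^[j] b = a) := by
  intro k
  induction k with
  | zero =>
    intro a b ha hb
    left
    exact ⟨1, hb.symm⟩
  | succ n ih =>
    intro a b ha hb
    rw [Function.iterate_succ_apply'] at hb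
    set c := (pdg G S)^[n] b with hc
    by_cases h1 : 2 ≤ rd G S c
    · have : c = a := pdg_inj h1 ha hb
      right
      exact ⟨n, this⟩
    · rw [pdg_eq_self (by omega)] at hb
      exact ih a b ha hb

lemma chain_comparable : ∀ (n : ℕ) (a b : V), rd G S a ≤ n →
    pdOrigin G S a = pdOrigin G S b →
    (∃ j, (pdg G S)^[j] a = b) ∨ (∃ j, (pdg G S)^[j] b = a) := by
  intro n
  induction n using Nat.strong_induction_on with
  | _ n ih =>
    intro a b hn horig
    by_cases h1 : rd G S a ≤ 1
    · right
      refine ⟨rd G S b, ?_⟩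
      have : pdOrigin G S a = a := by rw [pdOrigin, iter_fix h1]
      rw [← this, horig]
      rfl
    · push_neg at h1
      have h2 : 2 ≤ rd G S a := h1
      have hlt := rd_pdg_lt h2
      have horig' : pdOrigin G S (pdg G S a) = pdOrigin G S b := by
        rw [pdOrigin_pdg h2, horig]
      obtain ⟨n', rfl⟩ : ∃ n', n = n' + 1 := ⟨n - 1, by omega⟩
      rcases ih n' (by omega) (pdg G S a) b (by omega) horig' with ⟨j, hj⟩ | ⟨j, hj⟩
      · left
        exact ⟨j + 1, by rwa [Function.iterate_succ_apply]⟩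
      · exact chain_meet j a b h2 hj

lemma pdOrigin_inj {a b : V} (ha : 2 ≤ rd G S a) (hab : rd G S a = rd G S b)
    (horig : pdOrigin G S a = pdOrigin G S b) : a = b := by
  have key : ∀ x y : V, 2 ≤ rd G S x → rd G S x = rd G S y →
      (∃ j, (pdg G S)^[j] x = y) → x = y := by
    intro x y hx hxy ⟨j, hj⟩
    match j with
    | 0 => exact hj
    | j + 1 =>
      exfalso
      have : rd G S y < rd G S x := by
        rw [← hj, Function.iterate_succ_apply]
        exact lt_of_le_of_lt (rd_iter_le j (pdg G S x)) (rd_pdg_lt hx)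
      omega
  rcases chain_comparable (rd G S a) a b le_rfl horig with h | h
  · exact key a b ha hab h
  · exact (key b a (by omega) hab.symm h).symm

end Aux3

theorem stmt12 [Fintype V] (G : SimpleGraph V) (S : Set V) (hS : IsPDS G S) :
    ∀ i : ℕ, (newObs G S (i + 1)).ncard ≤ (newObs G S 1).ncard := by
  intro i
  match i with
  | 0 => exact le_rfl
  | i + 1 =>
    have hrd : ∀ a ∈ newObs G S (i + 2), rd G S a = i + 2 := by
      intro a ha
      obtain ⟨h1, h2⟩ := ha
      have hle := rd_le h1
      have : ¬ rd G S a ≤ i + 1 := by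
        intro hle'
        exact h2 (obs_mono G S hle' (mem_obs_rd_of_nonempty ⟨i + 2, h1⟩))
      omega
    apply Set.ncard_le_ncard_of_injOn (pdOrigin G S)
    · intro a ha
      exact pdOrigin_mem (rd G S a) a rfl (by rw [hrd a ha]; omega)
    · intro a ha b hb h
      exact pdOrigin_inj (by rw [hrd a ha]; omega) (by rw [hrd a ha, hrd b hb]) h
end

section
/- Let G be a connected unit interval graph with a fixed unit interval representation with distinct endpoints, inducing a linear order < on vertices by left endpoints. If S is a power dominating set, F a propagating set of forces, and v_0 → v_1 → ⋯ → v_i a forcing chain with v_0 < v_1, then v_1 < v_2 < ⋯ < v_i; moreover, if i ≥ 2 and rd(v_i) = k, then rd(u) ≤ k−1 for every vertex u with v_0 ≤ u < v_i. -/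
open SimpleGraph Set

variable {V : Type*} {W : Type*}

/-- A (propagating) set of forces for a power dominating set `S`: each vertex `w ∉ S`
is forced by the vertex `f w`, legally with respect to the round function `rd`. -/
structure ForceSet (G : SimpleGraph V) (S : Set V) where
  f : V → V
  adj : ∀ w, w ∉ S → G.Adj (f w) w
  dom : ∀ w, w ∉ S → rd G S w = 1 → f w ∈ S
  zf : ∀ w, w ∉ S → 2 ≤ rd G S w →
    rd G S (f w) < rd G S w ∧ ∀ x, G.Adj (f w) x → x ≠ w → rd G S x < rd G S w

/-!
Along a forcing chain the rounds strictly increase. If the chain turned left at `v_j`, then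
`v_{j-1}` and `v_{j+1}` would both lie in `[ℓ v_j - 1, ℓ v_j]`, hence be adjacent; so `v_{j+1}`
would be a neighbour of the forcer of `v_j` other than `v_j`, observed no later than `v_j`.
For the round bound, `u` lies between consecutive chain vertices `v_j ≤ u < v_{j+1}`, so `u` is
in the closed neighbourhood of the forcer `v_j` of `v_{j+1}`. Hence `u` is observed no later than
`v_{j+1}`, and strictly earlier when `v_j ∉ S`, which is the case for `j ≥ 1`; for `j = 0` the
strict step comes from `rd v_1 < rd v_2`.
-/

theorem exists_le_and_lt_succ_of_le_of_lt {α : Type*} [LinearOrder α] {f : ℕ → α} {x : α}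
    {n : ℕ} (h0 : f 0 ≤ x) (hn : x < f n) : ∃ j < n, f j ≤ x ∧ x < f (j + 1) := by
  induction n with
  | zero => exact absurd h0 (not_le.2 hn)
  | succ n ih =>
    by_cases h : f n ≤ x
    · exact ⟨n, n.lt_succ_self, h, hn⟩
    · obtain ⟨j, hj, hfj⟩ := ih (not_le.1 h)
      exact ⟨j, hj.trans n.lt_succ_self, hfj⟩

lemma closedNbhdSet_mono (G : SimpleGraph V) {S T : Set V} (h : S ⊆ T) :
    closedNbhdSet G S ⊆ closedNbhdSet G T :=
  Set.union_subset_union h fun _ ⟨u, hu, huw⟩ => ⟨u, h hu, huw⟩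

section Rounds

variable {G : SimpleGraph V} {S : Set V} {v : V}

lemma rd_le_of_mem_obs {k : ℕ} (h : v ∈ obs G S k) : rd G S v ≤ k :=
  Nat.sInf_le h

lemma rd_eq_zero_of_mem (h : v ∈ S) : rd G S v = 0 :=
  Nat.le_zero.1 (rd_le_of_mem_obs (k := 0) h)

lemma rd_le_one_of_mem_closedNbhdSet (h : v ∈ closedNbhdSet G S) : rd G S v ≤ 1 :=
  rd_le_of_mem_obs (k := 1) h

-- Without `IsPDS`, a vertex that is never observed would get the junk round `sInf ∅ = 0`.
lemma one_le_rd (hS : IsPDS G S) (hv : v ∉ S) : 1 ≤ rd G S v := by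
  obtain ⟨t, ht⟩ := hS
  have hne : {k | v ∈ obs G S k}.Nonempty := ⟨t, show v ∈ obs G S t from ht ▸ mem_univ v⟩
  refine Nat.one_le_iff_ne_zero.2 fun h0 => hv ?_
  have hmem := Nat.sInf_mem hne
  rwa [← rd, h0] at hmem

end Rounds

namespace ForceSet

variable {G : SimpleGraph V} {S : Set V} (F : ForceSet G S) (hS : IsPDS G S) {w x : V}
include hS

lemma two_le_rd (hw : w ∉ S) (hfw : F.f w ∉ S) : 2 ≤ rd G S w := by
  by_contra h
  have h1 : rd G S w = 1 := by have := one_le_rd hS hw; omega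
  exact hfw (F.dom w hw h1)

lemma rd_forcer_lt (hw : w ∉ S) : rd G S (F.f w) < rd G S w := by
  by_cases hfw : F.f w ∈ S
  · rw [rd_eq_zero_of_mem hfw]
    exact one_le_rd hS hw
  · exact (F.zf w hw (F.two_le_rd hS hw hfw)).1

lemma rd_lt_of_mem_closedNbhdSet (hw : w ∉ S) (hfw : F.f w ∉ S)
    (hx : x ∈ closedNbhdSet G {F.f w}) (hxw : x ≠ w) : rd G S x < rd G S w := by
  have h2 := F.two_le_rd hS hw hfw
  rcases hx with rfl | ⟨_, rfl, hx⟩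
  · exact (F.zf w hw h2).1
  · exact (F.zf w hw h2).2 x hx hxw

lemma rd_le_of_mem_closedNbhdSet (hw : w ∉ S) (hx : x ∈ closedNbhdSet G {F.f w})
    (hxw : x ≠ w) : rd G S x ≤ rd G S w := by
  by_cases hfw : F.f w ∈ S
  · calc rd G S x ≤ 1 :=
          rd_le_one_of_mem_closedNbhdSet (closedNbhdSet_mono G (singleton_subset_iff.2 hfw) hx)
      _ ≤ rd G S w := one_le_rd hS hw
  · exact (F.rd_lt_of_mem_closedNbhdSet hS hw hfw hx hxw).le

end ForceSet

def ForceSet.IsForcingChain {G : SimpleGraph V} {S : Set V} (F : ForceSet G S) (c : ℕ → V)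
    (i : ℕ) : Prop :=
  ∀ j, j < i → c (j + 1) ∉ S ∧ F.f (c (j + 1)) = c j

namespace ForceSet.IsForcingChain

variable {G : SimpleGraph V} {S : Set V} {F : ForceSet G S} {c : ℕ → V} {i j : ℕ}

lemma adj (hc : F.IsForcingChain c i) (hj : j < i) : G.Adj (c j) (c (j + 1)) :=
  (hc j hj).2 ▸ F.adj _ (hc j hj).1

lemma not_mem (hc : F.IsForcingChain c i) (hj : 1 ≤ j) (hji : j ≤ i) : c j ∉ S := by
  obtain ⟨k, rfl⟩ := Nat.exists_eq_add_of_le' hj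
  exact (hc k hji).1

lemma rd_strictMonoOn (hS : IsPDS G S) (hc : F.IsForcingChain c i) :
    StrictMonoOn (fun j => rd G S (c j)) (Iic i) :=
  strictMonoOn_Iic_of_lt_succ fun j hj => by
    simpa only [Order.succ_eq_add_one, (hc j hj).2] using F.rd_forcer_lt hS (hc j hj).1

end ForceSet.IsForcingChain

/-- `ℓ` gives the left endpoints of a unit interval representation of `G`. -/
def IsUnitIntervalRep (G : SimpleGraph V) (ℓ : V → ℝ) : Prop :=
  ∀ u v, G.Adj u v ↔ u ≠ v ∧ |ℓ u - ℓ v| ≤ 1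

namespace IsUnitIntervalRep

variable {G : SimpleGraph V} {ℓ : V → ℝ} (hrep : IsUnitIntervalRep G ℓ) {a b x : V}
include hrep

lemma mem_closedNbhdSet_of_le_of_le (hab : G.Adj a b) (hax : ℓ a ≤ ℓ x) (hxb : ℓ x ≤ ℓ b) :
    x ∈ closedNbhdSet G {a} := by
  rcases eq_or_ne a x with rfl | hne
  · exact Or.inl rfl
  · have hab' := abs_le.1 ((hrep a b).1 hab).2
    exact Or.inr ⟨a, rfl, (hrep a x).2 ⟨hne, abs_le.2 ⟨by linarith, by linarith⟩⟩⟩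

lemma adj_of_adj_of_adj_of_le (hab : G.Adj a b) (hxb : G.Adj x b) (ha : ℓ a ≤ ℓ b)
    (hx : ℓ x ≤ ℓ b) (hax : a ≠ x) : G.Adj a x := by
  have hab' := abs_le.1 ((hrep a b).1 hab).2
  have hxb' := abs_le.1 ((hrep x b).1 hxb).2
  exact (hrep a x).2 ⟨hax, abs_le.2 ⟨by linarith, by linarith⟩⟩

variable {S : Set V} {F : ForceSet G S} {c : ℕ → V} {i : ℕ}

lemma forcingChain_lt_succ_succ (hS : IsPDS G S) (hc : F.IsForcingChain c i) {j : ℕ}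
    (hj : j + 1 < i) (hlt : ℓ (c j) < ℓ (c (j + 1))) : ℓ (c (j + 1)) < ℓ (c (j + 2)) := by
  by_contra! hle
  have hmono := hc.rd_strictMonoOn hS
  have hnext := hc.adj hj
  have hne : c j ≠ c (j + 2) := fun h =>
    (hmono (mem_Iic.2 (by omega)) (mem_Iic.2 hj) (by omega : j < j + 2)).ne (congrArg _ h)
  have hadj : G.Adj (c j) (c (j + 2)) :=
    hrep.adj_of_adj_of_adj_of_le (hc.adj (by omega)) hnext.symm hlt.le hle hne
  have hmem : c (j + 2) ∈ closedNbhdSet G {F.f (c (j + 1))} := by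
    rw [(hc j (by omega)).2]
    exact Or.inr ⟨c j, rfl, hadj⟩
  have hle' := F.rd_le_of_mem_closedNbhdSet hS (hc j (by omega)).1 hmem hnext.ne.symm
  exact hle'.not_gt (hmono (mem_Iic.2 (by omega)) (mem_Iic.2 hj) (by omega))

lemma forcingChain_lt_succ (hS : IsPDS G S) (hc : F.IsForcingChain c i) (h01 : ℓ (c 0) < ℓ (c 1)) :
    ∀ j, j < i → ℓ (c j) < ℓ (c (j + 1))
  | 0, _ => h01
  | j + 1, hj => hrep.forcingChain_lt_succ_succ hS hc hj (forcingChain_lt_succ hS hc h01 j (by omega))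

lemma forcingChain_rd_add_one_le (hS : IsPDS G S) (hc : F.IsForcingChain c i) (hi : 2 ≤ i) {u : V}
    (hu0 : ℓ (c 0) ≤ ℓ u) (hui : ℓ u < ℓ (c i)) : rd G S u + 1 ≤ rd G S (c i) := by
  obtain ⟨j, hji, hju, huj⟩ := exists_le_and_lt_succ_of_le_of_lt (f := fun j => ℓ (c j)) hu0 hui
  have hmono := hc.rd_strictMonoOn hS
  have hne : u ≠ c (j + 1) := by rintro rfl; exact huj.false
  have hu : u ∈ closedNbhdSet G {F.f (c (j + 1))} := by
    rw [(hc j hji).2]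
    exact hrep.mem_closedNbhdSet_of_le_of_le (hc.adj hji) hju huj.le
  rcases Nat.eq_zero_or_pos j with rfl | hj
  · calc rd G S u + 1 ≤ rd G S (c 1) + 1 :=
          Nat.add_le_add_right (F.rd_le_of_mem_closedNbhdSet hS (hc 0 hji).1 hu hne) 1
      _ ≤ rd G S (c 2) := hmono (mem_Iic.2 (by omega)) (mem_Iic.2 hi) one_lt_two
      _ ≤ rd G S (c i) := hmono.monotoneOn (mem_Iic.2 hi) self_mem_Iic hi
  · have hfw : F.f (c (j + 1)) ∉ S := (hc j hji).2 ▸ hc.not_mem hj hji.le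
    calc rd G S u + 1 ≤ rd G S (c (j + 1)) :=
          F.rd_lt_of_mem_closedNbhdSet hS (hc j hji).1 hfw hu hne
      _ ≤ rd G S (c i) := hmono.monotoneOn (mem_Iic.2 hji) self_mem_Iic hji

end IsUnitIntervalRep

theorem stmt16_general (G : SimpleGraph V) (ℓ : V → ℝ)
    (hrep : ∀ u v, G.Adj u v ↔ u ≠ v ∧ |ℓ u - ℓ v| ≤ 1)
    (S : Set V) (hS : IsPDS G S) (F : ForceSet G S)
    (i : ℕ) (c : ℕ → V)
    (hchain : ∀ j, j < i → c (j + 1) ∉ S ∧ F.f (c (j + 1)) = c j)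
    (hlt : ℓ (c 0) < ℓ (c 1)) :
    (∀ j, 1 ≤ j → j < i → ℓ (c j) < ℓ (c (j + 1))) ∧
      (2 ≤ i → ∀ u, ℓ (c 0) ≤ ℓ u → ℓ u < ℓ (c i) → rd G S u + 1 ≤ rd G S (c i)) :=
  ⟨fun j _ hj => IsUnitIntervalRep.forcingChain_lt_succ hrep hS hchain hlt j hj,
    fun hi _ hu0 hui => IsUnitIntervalRep.forcingChain_rd_add_one_le hrep hS hchain hi hu0 hui⟩

theorem stmt16 [Fintype V] (G : SimpleGraph V) (hG : G.Connected)
    (ℓ : V → ℝ) (hinj : Function.Injective ℓ)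
    (hrep : ∀ u v, G.Adj u v ↔ u ≠ v ∧ |ℓ u - ℓ v| ≤ 1)
    (S : Set V) (hS : IsPDS G S) (F : ForceSet G S)
    (i : ℕ) (hi : 1 ≤ i) (c : ℕ → V)
    (hchain : ∀ j, j < i → c (j + 1) ∉ S ∧ F.f (c (j + 1)) = c j)
    (hlt : ℓ (c 0) < ℓ (c 1)) :
    (∀ j, 1 ≤ j → j < i → ℓ (c j) < ℓ (c (j + 1))) ∧
      (2 ≤ i → ∀ u, ℓ (c 0) ≤ ℓ u → ℓ u < ℓ (c i) → rd G S u + 1 ≤ rd G S (c i)) :=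
  stmt16_general G ℓ hrep S hS F i c hchain hlt
end
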